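/- Let ω be an n-bit key with n₁ ones in its binary representation, and let f be the fixed point of the associated self-inverting permutation P_s. If f ≠ 2n+1, then P_s(n₁+1) = 2n+1 and P_s(2n+1) = n₁+1. If f = 2n+1, then P_s(2n+1) = 2n+1. -/

import Mathlib

/-- Binary representation of `ω`, most significant bit first. -/
def binRep (ω : ℕ) : List Bool := (Nat.bits ω).reverse

/-- The extended binary `B*`: `n` ones, then the one's complement of `B`, then a zero. -/
def extBin (ω : ℕ) : List Bool :=
  List.replicate (binRep ω).length true ++ (binRep ω).map (!·) ++ [false]

/-- Ascending list of 1-indexed positions of bit `b` in the bit string `l`. -/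
def posOf (l : List Bool) (b : Bool) : List ℕ :=
  ((List.range l.length).filter (fun i => l.getD i false == b)).map (· + 1)

/-- `Z₀`: ascending positions of zeros in `B*`. -/
def Z0 (ω : ℕ) : List ℕ := posOf (extBin ω) false

/-- `Z₁`: ascending positions of ones in `B*`. -/
def Z1 (ω : ℕ) : List ℕ := posOf (extBin ω) true

/-- Bitonic permutation `P_b = Z₀ ++ reverse Z₁`. -/
def Pb (ω : ℕ) : List ℕ := Z0 ω ++ (Z1 ω).reverse

/-- The self-inverting permutation `P_s`: it pairs the elements of `P_b`
equidistant from its extremes, i.e. `P_s (b_{2n+2-i}) = b_i`. -/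
def Ps (ω : ℕ) (x : ℕ) : ℕ :=
  (Pb ω).getD ((Pb ω).length - 1 - (Pb ω).idxOf x) 0

/-!
Write `B*` as `1ⁿ C 0` with `C` the complement of `B`. The zeros of `B*` are the `n₁` positions
in `(n, 2n]` where `B` has a one, followed by `2n+1`; its ones are `1, …, n` followed by the
`n - n₁` positions in `(n, 2n]` where `B` has a zero. Hence
`P_b = A ++ [2n+1] ++ T ++ [n, …, 1]` with `|A| = n₁`, `|T| = n - n₁` and `A, T ⊆ (n, 2n]`.
`P_s` swaps the entries at (0-based) indices `i` and `2n - i`; the entry `2n+1` sits at index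
`n₁`, which is the middle `n` exactly when `n₁ = n`, and otherwise its partner at index
`2n - n₁` lies in the tail `[n, …, 1]` and equals `n₁ + 1`.
-/

namespace List

variable {α : Type*}

theorem map_getD_range (l : List α) (d : α) : (range l.length).map (l.getD · d) = l :=
  ext_getElem (by simp) fun i _ h => by simp [getElem?_eq_getElem h]

theorem getD_append_cons_length (A R : List α) (x d : α) :
    (A ++ x :: R).getD A.length d = x := by
  simp [getD_eq_getElem?_getD]

theorem mem_of_getD_eq {l : List α} {i : ℕ} {x d : α} (h : l.getD i d = x) (hd : x ≠ d) :
    x ∈ l := by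
  rw [getD_eq_getElem?_getD] at h
  cases hi : l[i]? with
  | none => simp only [hi, Option.getD_none] at h; exact absurd h.symm hd
  | some y => simp only [hi, Option.getD_some] at h; exact h ▸ mem_of_getElem? hi

theorem eq_length_of_getD_append_cons {A R : List α} {x d : α} {i : ℕ} (hA : x ∉ A)
    (hR : x ∉ R) (hd : x ≠ d) (h : (A ++ x :: R).getD i d = x) : i = A.length := by
  rcases lt_trichotomy i A.length with hlt | heq | hgt
  · rw [getD_append _ _ _ _ hlt] at h
    exact absurd (mem_of_getD_eq h hd) hA
  · exact heq
  · obtain ⟨j, rfl⟩ : ∃ j, i = A.length + (j + 1) := ⟨i - A.length - 1, by omega⟩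
    rw [getD_append_right _ _ _ _ (by omega), Nat.add_sub_cancel_left, getD_cons_succ] at h
    exact absurd (mem_of_getD_eq h hd) hR

theorem reverse_range'_one_eq {k n : ℕ} (h : k < n) :
    (range' 1 n).reverse =
      (range' (k + 2) (n - k - 1)).reverse ++ (k + 1) :: (range' 1 k).reverse := by
  obtain ⟨m, rfl⟩ : ∃ m, n = k + 1 + m := ⟨n - k - 1, by omega⟩
  rw [show k + 1 + m - k - 1 = m by omega, ← range'_append, range'_concat]
  simp [Nat.add_comm 1]

variable [BEq α] [LawfulBEq α]

def mirrorOf (l : List α) (d x : α) : α := l.getD (l.length - 1 - l.idxOf x) d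

theorem mirrorOf_append_cons_self {A R : List α} {x : α} (d : α) (hx : x ∉ A)
    (h : A.length = R.length) : (A ++ x :: R).mirrorOf d x = x := by
  simp [mirrorOf, idxOf_append_of_notMem hx, h, getD_eq_getElem?_getD]

theorem mirrorOf_append_cons_left {A M R : List α} {x y : α} (d : α) (hx : x ∉ A)
    (h : A.length = R.length) : (A ++ x :: (M ++ y :: R)).mirrorOf d x = y := by
  have hpos : (A ++ x :: (M ++ y :: R)).length - 1 - A.length = (A ++ x :: M).length := by
    simp only [length_append, length_cons]; omega
  rw [mirrorOf, idxOf_append_of_notMem hx, idxOf_cons_self, Nat.add_zero, hpos,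
    ← cons_append, ← append_assoc, getD_append_cons_length]

theorem mirrorOf_append_cons_right {A M R : List α} {x y : α} (d : α)
    (hy : y ∉ A ++ x :: M) (h : A.length = R.length) :
    (A ++ x :: (M ++ y :: R)).mirrorOf d y = x := by
  rw [← cons_append, ← append_assoc]
  have hpos : ((A ++ x :: M) ++ y :: R).length - 1 - (A ++ x :: M).length = A.length := by
    simp only [length_append, length_cons]; omega
  rw [mirrorOf, idxOf_append_of_notMem hy, idxOf_cons_self, Nat.add_zero, hpos, append_assoc,
    cons_append, getD_append_cons_length]

end List

theorem posOf_append (l₁ l₂ : List Bool) (b : Bool) :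
    posOf (l₁ ++ l₂) b = posOf l₁ b ++ (posOf l₂ b).map (· + l₁.length) := by
  simp only [posOf, List.length_append, List.range_add, List.filter_append, List.map_append,
    List.filter_map, List.map_map]
  congr 1
  · congr 1
    refine List.filter_congr fun i hi => ?_
    rw [List.getD_append _ _ _ _ (List.mem_range.mp hi)]
  · rw [List.filter_congr fun i _ => by
      rw [Function.comp_apply, List.getD_append_right _ _ _ _ (Nat.le_add_right _ _),
        Nat.add_sub_cancel_left]]
    congr 1
    funext i
    simp only [Function.comp_apply]
    omega

theorem posOf_replicate_self (n : ℕ) (b : Bool) :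
    posOf (List.replicate n b) b = List.range' 1 n := by
  rw [posOf, List.filter_eq_self.mpr, List.range'_eq_map_range]
  · simp [add_comm]
  · intro i hi
    simp_all [List.getD_eq_getElem?_getD]

theorem posOf_replicate_of_ne (n : ℕ) {b c : Bool} (h : b ≠ c) :
    posOf (List.replicate n b) c = [] := by
  simp +contextual [h, posOf, List.getD_eq_getElem?_getD, List.getElem?_replicate]

theorem length_posOf (l : List Bool) (b : Bool) : (posOf l b).length = l.count b := by
  rw [posOf, List.length_map, ← List.countP_eq_length_filter, List.count_eq_countP]
  conv_rhs => rw [← List.map_getD_range l false]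
  rw [List.countP_map]
  rfl

theorem mem_posOf {l : List Bool} {b : Bool} {x : ℕ} (h : x ∈ posOf l b) :
    0 < x ∧ x ≤ l.length := by
  simp only [posOf, List.mem_map, List.mem_filter, List.mem_range] at h
  omega

theorem Z0_eq (ω : ℕ) :
    Z0 ω = (posOf ((binRep ω).map (!·)) false).map (· + (binRep ω).length) ++
      [2 * (binRep ω).length + 1] := by
  simp [Z0, extBin, posOf_append, posOf_replicate_of_ne,
    show posOf [false] false = [1] from rfl]
  omega

theorem Z1_eq (ω : ℕ) :
    Z1 ω = List.range' 1 (binRep ω).length ++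
      (posOf ((binRep ω).map (!·)) true).map (· + (binRep ω).length) := by
  simp [Z1, extBin, posOf_append, posOf_replicate_self, show posOf [false] true = [] from rfl]

theorem Pb_eq_append {ω n n₁ : ℕ} (hn : (binRep ω).length = n)
    (hn1 : (binRep ω).count true = n₁) :
    ∃ A T : List ℕ, Pb ω = A ++ (2 * n + 1) :: (T ++ (List.range' 1 n).reverse) ∧
      A.length = n₁ ∧ T.length = n - n₁ ∧ ∀ x ∈ A ++ T, n < x ∧ x ≤ 2 * n := by
  subst hn hn1
  set C := (binRep ω).map (!·) with hC
  refine ⟨(posOf C false).map (· + (binRep ω).length),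
    ((posOf C true).map (· + (binRep ω).length)).reverse, ?_, ?_, ?_, ?_⟩
  · simp [Pb, Z0_eq, Z1_eq, hC]
  · simpa [length_posOf] using
      List.count_map_of_injective (binRep ω) (!·) Bool.not_injective true
  · have hcount : C.count true = (binRep ω).count false := by
      simpa using List.count_map_of_injective (binRep ω) (!·) Bool.not_injective false
    have := (binRep ω).count_true_add_count_false
    simp only [List.length_reverse, List.length_map, length_posOf]
    omega
  · have hlen : C.length = (binRep ω).length := List.length_map _
    intro x hx
    simp only [List.mem_append, List.mem_map, List.mem_reverse] at hx
    rcases hx with ⟨a, ha, rfl⟩ | ⟨a, ha, rfl⟩ <;> have := mem_posOf ha <;> omega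

theorem Ps_eq_mirrorOf (ω x : ℕ) : Ps ω x = (Pb ω).mirrorOf 0 x := rfl

theorem Ps_of_count_lt {ω n n₁ : ℕ} (hn : (binRep ω).length = n)
    (hn1 : (binRep ω).count true = n₁) (hlt : n₁ < n) :
    (Pb ω).getD n 0 ≠ 2 * n + 1 ∧
      Ps ω (n₁ + 1) = 2 * n + 1 ∧ Ps ω (2 * n + 1) = n₁ + 1 := by
  obtain ⟨A, T, hPb, hA, hT, hAT⟩ := Pb_eq_append hn hn1
  rw [List.reverse_range'_one_eq hlt, ← List.append_assoc] at hPb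
  set M := T ++ (List.range' (n₁ + 2) (n - n₁ - 1)).reverse
  set R := (List.range' 1 n₁).reverse
  have hAR : A.length = R.length := by simp [R, hA]
  have hmaxA : 2 * n + 1 ∉ A := fun h => by have := hAT _ (List.mem_append_left T h); omega
  have hmaxM : 2 * n + 1 ∉ M ++ (n₁ + 1) :: R := by
    simp only [M, R, List.mem_append, List.mem_cons, List.mem_reverse, List.mem_range'_1, not_or]
    refine ⟨⟨fun h => ?_, by omega⟩, by omega, by omega⟩
    have := hAT _ (List.mem_append_right A h); omega
  have hsucc : n₁ + 1 ∉ A ++ (2 * n + 1) :: M := by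
    simp only [M, List.mem_append, List.mem_cons, List.mem_reverse, List.mem_range'_1, not_or]
    refine ⟨fun h => ?_, by omega, fun h => ?_, by omega⟩
    · have := hAT _ (List.mem_append_left T h); omega
    · have := hAT _ (List.mem_append_right A h); omega
  refine ⟨fun h => ?_, ?_, ?_⟩
  · rw [hPb] at h
    have := List.eq_length_of_getD_append_cons hmaxA hmaxM (by omega) h
    omega
  · rw [Ps_eq_mirrorOf, hPb, List.mirrorOf_append_cons_right 0 hsucc hAR]
  · rw [Ps_eq_mirrorOf, hPb, List.mirrorOf_append_cons_left 0 hmaxA hAR]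

theorem Ps_of_count_eq {ω n : ℕ} (hn : (binRep ω).length = n)
    (hn1 : (binRep ω).count true = n) :
    (Pb ω).getD n 0 = 2 * n + 1 ∧ Ps ω (2 * n + 1) = 2 * n + 1 := by
  obtain ⟨A, T, hPb, hA, hT, hAT⟩ := Pb_eq_append hn hn1
  rw [List.eq_nil_of_length_eq_zero (hT.trans (Nat.sub_self n)), List.nil_append] at hPb
  have hmaxA : 2 * n + 1 ∉ A := fun h => by have := hAT _ (List.mem_append_left T h); omega
  refine ⟨?_, ?_⟩
  · rw [hPb, ← hA, List.getD_append_cons_length]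
  · rw [Ps_eq_mirrorOf, hPb, List.mirrorOf_append_cons_self 0 hmaxA (by simp [hA])]

theorem stmt14_general (ω n n₁ : ℕ) (hn : (binRep ω).length = n)
    (hn1 : (binRep ω).count true = n₁) :
    ((Pb ω).getD n 0 ≠ 2*n+1 →
      Ps ω (n₁+1) = 2*n+1 ∧ Ps ω (2*n+1) = n₁+1) ∧
    ((Pb ω).getD n 0 = 2*n+1 → Ps ω (2*n+1) = 2*n+1) := by
  have hle : n₁ ≤ n := hn ▸ hn1 ▸ List.count_le_length
  rcases hle.lt_or_eq with hlt | rfl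
  · obtain ⟨hfix, hsucc, hmax⟩ := Ps_of_count_lt hn hn1 hlt
    exact ⟨fun _ => ⟨hsucc, hmax⟩, fun h => absurd h hfix⟩
  · obtain ⟨hfix, hmax⟩ := Ps_of_count_eq hn hn1
    exact ⟨fun h => absurd hfix h, fun _ => hmax⟩

/-- With `n₁` the number of ones in `B` and `f = b_{n+1}` the fixed point of `P_s`:
if `f ≠ 2n+1` then `P_s (n₁+1) = 2n+1` and `P_s (2n+1) = n₁+1`;
if `f = 2n+1` then `P_s (2n+1) = 2n+1`. -/
theorem stmt14 (ω n n₁ : ℕ) (hω : 0 < ω) (hn : (binRep ω).length = n)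
    (hn1 : (binRep ω).count true = n₁) :
    ((Pb ω).getD n 0 ≠ 2*n+1 →
      Ps ω (n₁+1) = 2*n+1 ∧ Ps ω (2*n+1) = n₁+1) ∧
    ((Pb ω).getD n 0 = 2*n+1 → Ps ω (2*n+1) = 2*n+1) :=
  stmt14_general ω n n₁ hn hn1
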